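/- arXiv:math/0508199 — 2 statements merged into one kernel-verified Lean document; each statement's English description precedes it below -/
import Mathlib

section
/- Let P ⊆ ℝ^k, f_P separably increasing on P, u₁ strictly increasing with 0 < u₁ < 1, α < β, u = α + (β-α)u₁, and f the extension defined by f(x) = max{a(x), min{b(x), β} - β + α}(1 - u₁(x)) + min{b(x), max{a(x), α} - α + β} u₁(x). If x satisfies b(x) - a(x) ≤ β - α (with a(x), b(x) finite), then f(x) = a(x)(1 - u₁(x)) + b(x) u₁(x). -/
open Set

noncomputable def aF {X : Type*} [Preorder X] (P : Set X) (f : X → ℝ) (x : X) : EReal :=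
  sSup ((fun y => (f y : EReal)) '' {y ∈ P | y ≤ x})

noncomputable def bF {X : Type*} [Preorder X] (P : Set X) (f : X → ℝ) (x : X) : EReal :=
  sInf ((fun z => (f z : EReal)) '' {z ∈ P | x ≤ z})

/-- The extension formula (8) of the paper, computed in the extended reals:
`f(x) = max{a(x), min{b(x),β} - β + α}·(1 - u₁(x)) + min{b(x), max{a(x),α} - α + β}·u₁(x)`. -/
noncomputable def extF {X : Type*} [Preorder X] (P : Set X) (fP : X → ℝ)
    (u₁ : X → ℝ) (a b : ℝ) (x : X) : EReal :=
  max (aF P fP x) (min (bF P fP x) (b : EReal) - (b : EReal) + (a : EReal))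
      * ((1 : EReal) - (u₁ x : EReal))
    + min (bF P fP x) (max (aF P fP x) (a : EReal) - (a : EReal) + (b : EReal))
      * (u₁ x : EReal)

lemma ecoe_min (a b : ℝ) : ((min a b : ℝ) : EReal) = min (a:EReal) (b:EReal) := by
  rcases le_total a b with h|h <;>
    simp [min_eq_left, min_eq_right, h, EReal.coe_le_coe_iff]

lemma ecoe_max (a b : ℝ) : ((max a b : ℝ) : EReal) = max (a:EReal) (b:EReal) := by
  rcases le_total a b with h|h <;>
    simp [max_eq_left, max_eq_right, h, EReal.coe_le_coe_iff]

theorem stmt_10 {k : ℕ} (P : Set (Fin k → ℝ)) (fP : (Fin k → ℝ) → ℝ)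
    (hsep : ∀ x x' : Fin k → ℝ, x < x' → aF P fP x < bF P fP x')
    (u₁ : (Fin k → ℝ) → ℝ) (hu₁ : StrictMono u₁)
    (hu₁bd : ∀ x, 0 < u₁ x ∧ u₁ x < 1)
    (α β : ℝ) (hαβ : α < β)
    (x : Fin k → ℝ) (ar br : ℝ)
    (ha : aF P fP x = (ar : EReal)) (hb : bF P fP x = (br : EReal))
    (hcase : br - ar ≤ β - α) :
    extF P fP u₁ α β x = ((ar * (1 - u₁ x) + br * u₁ x : ℝ) : EReal) := by
  have h1 : max ar (min br β - β + α) = ar := by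
    rcases le_total br β with h|h
    · rw [min_eq_left h]; rw [max_eq_left]; linarith
    · rw [min_eq_right h]; rw [max_eq_left]; linarith
  have h2 : min br (max ar α - α + β) = br := by
    rcases le_total ar α with h|h
    · rw [max_eq_right h]; rw [min_eq_left]; linarith
    · rw [max_eq_left h]; rw [min_eq_left]; linarith
  unfold extF
  rw [ha, hb]
  have e1 : max (ar:EReal) (min (br:EReal) (β:EReal) - (β:EReal) + (α:EReal))
      = ((ar:ℝ):EReal) := by
    rw [← ecoe_min, ← EReal.coe_sub, ← EReal.coe_add, ← ecoe_max, h1]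
  have e2 : min (br:EReal) (max (ar:EReal) (α:EReal) - (α:EReal) + (β:EReal))
      = ((br:ℝ):EReal) := by
    rw [← ecoe_max, ← EReal.coe_sub, ← EReal.coe_add, ← ecoe_min, h2]
  rw [e1, e2]
  norm_cast
end

section
/- Let P ⊆ ℝ^k, f_P separably increasing, u₁ strictly increasing with 0 < u₁ < 1, α < β, u = α + (β-α)u₁, and f the extension defined as above. If x satisfies b(x) - a(x) ≥ β - α and b(x) ≤ β, then f(x) = b(x) + u(x) - β. Symmetrically, if b(x) - a(x) ≥ β - α and a(x) ≥ α, then f(x) = a(x) + u(x) - α. If a(x) ≤ α and b(x) ≥ β, then f(x) = u(x). -/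
open Set

theorem stmt_11 {k : ℕ} (P : Set (Fin k → ℝ)) (fP : (Fin k → ℝ) → ℝ)
    (hsep : ∀ x x' : Fin k → ℝ, x < x' → aF P fP x < bF P fP x')
    (u₁ : (Fin k → ℝ) → ℝ) (hu₁ : StrictMono u₁)
    (hu₁bd : ∀ x, 0 < u₁ x ∧ u₁ x < 1)
    (α β : ℝ) (hαβ : α < β)
    (u : (Fin k → ℝ) → ℝ) (hu : ∀ x, u x = α + (β - α) * u₁ x)
    (x : Fin k → ℝ) :
    (bF P fP x - aF P fP x ≥ ((β - α : ℝ) : EReal) → bF P fP x ≤ (β : EReal) →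
        extF P fP u₁ α β x = bF P fP x + (u x : EReal) - (β : EReal)) ∧
    (bF P fP x - aF P fP x ≥ ((β - α : ℝ) : EReal) → aF P fP x ≥ (α : EReal) →
        extF P fP u₁ α β x = aF P fP x + (u x : EReal) - (α : EReal)) ∧
    (aF P fP x ≤ (α : EReal) → bF P fP x ≥ (β : EReal) →
        extF P fP u₁ α β x = (u x : EReal)) := by
  refine ⟨?_, ?_, ?_⟩
  · intro h1 h2
    have hBt : bF P fP x ≠ ⊤ := by
      intro h; rw [h] at h2; simp at h2
    have hBb : bF P fP x ≠ ⊥ := by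
      intro h; rw [h, EReal.bot_sub] at h1; exact (EReal.coe_ne_bot _) (le_bot_iff.mp h1)
    have hAt : aF P fP x ≠ ⊤ := by
      intro h; rw [h, EReal.sub_top] at h1; exact (EReal.coe_ne_bot _) (le_bot_iff.mp h1)
    obtain ⟨b₀, hb₀⟩ : ∃ r : ℝ, bF P fP x = (r : EReal) := by
      lift bF P fP x to ℝ using ⟨hBt, hBb⟩ with r; exact ⟨r, rfl⟩
    have hb₀β : b₀ ≤ β := by rw [hb₀] at h2; exact_mod_cast h2
    have hAle : aF P fP x ≤ ((b₀ - β + α : ℝ) : EReal) := by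
      rcases eq_or_ne (aF P fP x) ⊥ with h | h
      · rw [h]; exact bot_le
      · obtain ⟨a₀, ha₀⟩ : ∃ r : ℝ, aF P fP x = (r : EReal) :=
          ⟨(aF P fP x).toReal, (EReal.coe_toReal hAt h).symm⟩
        rw [ha₀]; rw [hb₀, ha₀] at h1
        have : (β - α : ℝ) ≤ b₀ - a₀ := by exact_mod_cast h1
        exact_mod_cast (by linarith : a₀ ≤ b₀ - β + α)
    have hAα : aF P fP x ≤ ((α : ℝ) : EReal) :=
      hAle.trans (by exact_mod_cast (by linarith : b₀ - β + α ≤ α))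
    rw [extF, hb₀]
    rw [min_eq_left (by exact_mod_cast hb₀β : ((b₀ : ℝ) : EReal) ≤ (β : EReal))]
    have e1 : ((b₀ : ℝ) : EReal) - (β : EReal) + (α : EReal) = ((b₀ - β + α : ℝ) : EReal) := by
      norm_cast
    rw [e1, max_eq_right hAle, max_eq_right hAα]
    have e2 : ((α : ℝ) : EReal) - (α : EReal) + (β : EReal) = ((β : ℝ) : EReal) := by norm_cast; ring
    rw [e2, min_eq_left (by exact_mod_cast hb₀β : ((b₀ : ℝ) : EReal) ≤ (β : EReal))]
    have : ((1 : EReal) - (u₁ x : ℝ)) = ((1 - u₁ x : ℝ) : EReal) := by norm_cast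
    rw [this]
    norm_cast
    rw [hu]; ring
  · intro h1 h2
    have hAb : aF P fP x ≠ ⊥ := by
      intro h; rw [h] at h2; simp [ge_iff_le, le_bot_iff] at h2
    have hAt : aF P fP x ≠ ⊤ := by
      intro h; rw [h, EReal.sub_top] at h1; exact (EReal.coe_ne_bot _) (le_bot_iff.mp h1)
    obtain ⟨a₀, ha₀⟩ : ∃ r : ℝ, aF P fP x = (r : EReal) := by
      lift aF P fP x to ℝ using ⟨hAt, hAb⟩ with r; exact ⟨r, rfl⟩
    have hαa : α ≤ a₀ := by rw [ha₀] at h2; exact_mod_cast h2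
    have hBb : bF P fP x ≠ ⊥ := by
      intro h; rw [h, EReal.bot_sub] at h1; exact (EReal.coe_ne_bot _) (le_bot_iff.mp h1)
    have hBkey : ((a₀ - α + β : ℝ) : EReal) ≤ bF P fP x := by
      rcases eq_or_ne (bF P fP x) ⊤ with h | h
      · rw [h]; exact le_top
      · obtain ⟨c, hc⟩ : ∃ r : ℝ, bF P fP x = (r : EReal) :=
          ⟨(bF P fP x).toReal, (EReal.coe_toReal h hBb).symm⟩
        rw [hc]; rw [hc, ha₀] at h1
        have : (β - α : ℝ) ≤ c - a₀ := by exact_mod_cast h1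
        exact_mod_cast (by linarith : a₀ - α + β ≤ c)
    have hBβ : ((β : ℝ) : EReal) ≤ bF P fP x :=
      le_trans (by exact_mod_cast (by linarith : β ≤ a₀ - α + β)) hBkey
    rw [extF, ha₀]
    rw [min_eq_right hBβ]
    have e1 : ((β : ℝ) : EReal) - (β : EReal) + (α : EReal) = ((α : ℝ) : EReal) := by
      norm_cast; ring
    rw [e1, max_eq_left (by exact_mod_cast hαa : ((α:ℝ):EReal) ≤ ((a₀:ℝ):EReal))]
    have e2 : ((a₀ : ℝ) : EReal) - (α : EReal) + (β : EReal) = ((a₀ - α + β : ℝ) : EReal) := by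
      norm_cast
    rw [e2, min_eq_right hBkey]
    have : ((1 : EReal) - (u₁ x : ℝ)) = ((1 - u₁ x : ℝ) : EReal) := by norm_cast
    rw [this]
    norm_cast
    rw [hu]; ring
  · intro h1 h2
    rw [extF]
    rw [min_eq_right h2]
    have e1 : ((β : ℝ) : EReal) - (β : EReal) + (α : EReal) = ((α : ℝ) : EReal) := by
      norm_cast; ring
    rw [e1, max_eq_right h1]
    have e2 : ((α : ℝ) : EReal) - (α : EReal) + (β : EReal) = ((β : ℝ) : EReal) := by
      norm_cast; ring
    rw [e2, min_eq_right h2]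
    have : ((1 : EReal) - (u₁ x : ℝ)) = ((1 - u₁ x : ℝ) : EReal) := by norm_cast
    rw [this]
    norm_cast
    rw [hu]; ring
end
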